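/- Let p > 1 and let A be a real symmetric n×n matrix such that max { |xᵀAx| : ‖x‖_p = 1 } = n^{−2/p} |∑_{i,j} a_{ij}|. Then A has constant row sums. -/

import Mathlib

/-! Homogeneity gives `|xᵀAx| ≤ η⁽ᵖ⁾(A) ‖x‖ₚ²` for every `x`, and the hypothesis says this is an
equality at the constant vector `𝟙`. Along `x(t) = 𝟙 + t (eₐ - e_b)` the `ℓᵖ` norm is stationary at
`t = 0`, since the two perturbed coordinates move in opposite directions, so by Fermat's rule the
derivative `2 (rₐ - r_b)` of `x(t)ᵀAx(t)` at `0` vanishes, `r` being the row sums of `A`. -/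

open Filter Topology Finset

theorem HasDerivAt.eq_zero_of_abs_le {f g : ℝ → ℝ} {f' x : ℝ} (hf : HasDerivAt f f' x)
    (hg : HasDerivAt g 0 x) (hle : ∀ᶠ t in 𝓝 x, |f t| ≤ g t) (hx : g x = |f x|) : f' = 0 := by
  rcases le_total 0 (f x) with hfx | hfx
  · have hmin : IsLocalMin (g - f) x :=
      hle.mono fun t ht => by
        simp only [Pi.sub_apply, hx, abs_of_nonneg hfx]
        linarith [le_abs_self (f t)]
    linarith [hmin.hasDerivAt_eq_zero (hg.sub hf)]
  · have hmin : IsLocalMin (g + f) x :=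
      hle.mono fun t ht => by
        simp only [Pi.add_apply, hx, abs_of_nonpos hfx]
        linarith [neg_abs_le (f t)]
    linarith [hmin.hasDerivAt_eq_zero (hg.add hf)]

variable {ι : Type*} [Fintype ι]

noncomputable def pSpectralRadius (p : ℝ) (A : Matrix ι ι ℝ) : ℝ :=
  sSup {t : ℝ | ∃ x : ι → ℝ, (∑ i, |x i| ^ p) = 1 ∧ t = |∑ i, ∑ j, A i j * x i * x j|}

theorem abs_le_one_of_sum_abs_rpow_eq_one {p : ℝ} (hp : 0 < p) {x : ι → ℝ}
    (hx : ∑ i, |x i| ^ p = 1) (i : ι) : |x i| ≤ 1 := by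
  by_contra! h
  have h1 : 1 < |x i| ^ p := Real.one_lt_rpow h hp
  have h2 : |x i| ^ p ≤ ∑ i, |x i| ^ p :=
    single_le_sum (fun j _ => Real.rpow_nonneg (abs_nonneg (x j)) p) (mem_univ i)
  linarith

theorem bddAbove_abs_quadForm_lpSphere {p : ℝ} (hp : 0 < p) (A : Matrix ι ι ℝ) :
    BddAbove {t : ℝ | ∃ x : ι → ℝ, (∑ i, |x i| ^ p) = 1 ∧
      t = |∑ i, ∑ j, A i j * x i * x j|} := by
  refine ⟨∑ i, ∑ j, |A i j|, ?_⟩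
  rintro t ⟨x, hx, rfl⟩
  have hx1 := abs_le_one_of_sum_abs_rpow_eq_one hp hx
  calc |∑ i, ∑ j, A i j * x i * x j| ≤ ∑ i, ∑ j, |A i j * x i * x j| :=
        (abs_sum_le_sum_abs _ _).trans (sum_le_sum fun i _ => abs_sum_le_sum_abs _ _)
    _ ≤ ∑ i, ∑ j, |A i j| := sum_le_sum fun i _ => sum_le_sum fun j _ => by
        rw [abs_mul, abs_mul]
        calc |A i j| * |x i| * |x j| ≤ |A i j| * 1 * 1 := by gcongr <;> exact hx1 _
          _ = |A i j| := by ring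

theorem abs_quadForm_le_pSpectralRadius {p : ℝ} (hp : 0 < p) (A : Matrix ι ι ℝ) (x : ι → ℝ) :
    |∑ i, ∑ j, A i j * x i * x j| ≤ pSpectralRadius p A * (∑ i, |x i| ^ p) ^ (2 / p) := by
  set N := ∑ i, |x i| ^ p
  have hN0 : 0 ≤ N := sum_nonneg fun i _ => Real.rpow_nonneg (abs_nonneg (x i)) p
  rcases hN0.eq_or_lt with hN | hN
  · have hx : ∀ i, x i = 0 := fun i => by
      have := (sum_eq_zero_iff_of_nonneg fun j _ => Real.rpow_nonneg (abs_nonneg (x j)) p).1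
        hN.symm i (mem_univ i)
      simpa [Real.rpow_eq_zero (abs_nonneg _) hp.ne'] using this
    simp only [hx, mul_zero, sum_const_zero, abs_zero]
    rw [← hN, Real.zero_rpow (div_ne_zero two_ne_zero hp.ne'), mul_zero]
  set M := N ^ (1 / p)
  have hM : 0 < M := Real.rpow_pos_of_pos hN _
  have hMp : M ^ p = N := by
    rw [← Real.rpow_mul hN.le, one_div_mul_cancel hp.ne', Real.rpow_one]
  have hMM : M * M = N ^ (2 / p) := by
    rw [← Real.rpow_add hN]; congr 1; ring
  have hmem : |∑ i, ∑ j, A i j * (x i / M) * (x j / M)| ≤ pSpectralRadius p A := by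
    refine le_csSup (bddAbove_abs_quadForm_lpSphere hp A) ⟨fun i => x i / M, ?_, rfl⟩
    simp only [abs_div, abs_of_pos hM, Real.div_rpow (abs_nonneg _) hM.le, hMp, ← sum_div]
    exact div_self hN.ne'
  have hscale : ∑ i, ∑ j, A i j * (x i / M) * (x j / M) =
      (∑ i, ∑ j, A i j * x i * x j) / (M * M) := by
    simp only [sum_div]; congr! 2; field_simp
  rw [hscale, abs_div, abs_of_pos (mul_pos hM hM), div_le_iff₀ (mul_pos hM hM), hMM] at hmem
  exact hmem

theorem hasDerivAt_quadForm_add_mul {A : Matrix ι ι ℝ} (hA : A.IsSymm) (v w : ι → ℝ) :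
    HasDerivAt (fun t => ∑ i, ∑ j, A i j * (v i + t * w i) * (v j + t * w j))
      (2 * ∑ i, ∑ j, A i j * w i * v j) 0 := by
  have hline : ∀ i, HasDerivAt (fun t => v i + t * w i) (w i) 0 := fun i => by
    simpa using ((hasDerivAt_id (0 : ℝ)).mul_const (w i)).const_add (v i)
  refine (HasDerivAt.fun_sum fun i _ => HasDerivAt.fun_sum fun j _ =>
    ((hline i).const_mul (A i j)).fun_mul (hline j)).congr_deriv ?_
  simp only [zero_mul, add_zero, sum_add_distrib]
  rw [two_mul]
  congr 1
  rw [sum_comm]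
  refine sum_congr rfl fun i _ => sum_congr rfl fun j _ => ?_
  rw [hA.apply]
  ring

theorem hasDerivAt_sum_abs_one_add_mul_rpow (p : ℝ) (w : ι → ℝ) :
    HasDerivAt (fun t => ∑ i, |1 + t * w i| ^ p) (p * ∑ i, w i) 0 := by
  rw [mul_sum]
  refine HasDerivAt.fun_sum fun i _ => ?_
  have hline : HasDerivAt (fun t => 1 + t * w i) (w i) 0 := by
    simpa using ((hasDerivAt_id (0 : ℝ)).mul_const (w i)).const_add 1
  have hpos : ∀ᶠ t in 𝓝 (0 : ℝ), 0 < 1 + t * w i :=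
    hline.continuousAt.eventually (lt_mem_nhds (by simp))
  have := hline.rpow_const (p := p) (Or.inl (by simp))
  refine (this.congr_deriv (by simp; ring)).congr_of_eventuallyEq ?_
  filter_upwards [hpos] with t ht
  rw [abs_of_pos ht]

theorem sum_row_eq_of_pSpectralRadius_eq {p : ℝ} (hp : 0 < p) {A : Matrix ι ι ℝ}
    (hA : A.IsSymm)
    (hη : pSpectralRadius p A = (Fintype.card ι : ℝ) ^ (-(2 / p)) * |∑ i, ∑ j, A i j|)
    (a b : ι) : ∑ j, A a j = ∑ j, A b j := by
  classical
  set w : ι → ℝ := Pi.single a 1 - Pi.single b 1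
  have hw : ∑ i, w i = 0 := by simp [w]
  have hQ := hasDerivAt_quadForm_add_mul hA (fun _ => 1) w
  have hN := hasDerivAt_sum_abs_one_add_mul_rpow p w
  rw [hw, mul_zero] at hN
  have hn : (0 : ℝ) < Fintype.card ι := by exact_mod_cast Fintype.card_pos_iff.2 ⟨a⟩
  have hN0 : ∑ i, |1 + 0 * w i| ^ p = Fintype.card ι := by simp
  have hB : HasDerivAt
      (fun t => pSpectralRadius p A * (∑ i, |1 + t * w i| ^ p) ^ (2 / p)) 0 0 := by
    simpa using (hN.rpow_const (p := 2 / p) (Or.inl (hN0 ▸ hn.ne'))).const_mul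
      (pSpectralRadius p A)
  have h := hQ.eq_zero_of_abs_le hB (Eventually.of_forall fun t =>
    abs_quadForm_le_pSpectralRadius hp A (fun i => 1 + t * w i)) ?_
  · have hrow : ∑ i, ∑ j, A i j * w i * 1 = ∑ j, A a j - ∑ j, A b j := by
      simp only [mul_one, ← sum_mul]
      simp [w, mul_sub, Pi.single_apply]
    rw [hrow] at h
    linarith
  · rw [hN0, hη, mul_right_comm, ← Real.rpow_add hn, neg_add_cancel, Real.rpow_zero, one_mul]
    simp

/-- If η^{(p)}(A) = n^{-2/p}|ΣA| for a real symmetric matrix A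
and p > 1, then A has constant row sums. -/
theorem stmt_17 (n : ℕ) (p : ℝ) (hp : 1 < p)
    (A : Matrix (Fin n) (Fin n) ℝ) (hsym : A.IsSymm)
    (heq : sSup {t : ℝ | ∃ x : Fin n → ℝ, (∑ i, |x i| ^ p) = 1 ∧
        t = |∑ i, ∑ j, A i j * x i * x j|} =
      (n : ℝ) ^ (-(2 / p)) * |∑ i, ∑ j, A i j|) :
    ∀ i i', ∑ j, A i j = ∑ j, A i' j := by
  refine sum_row_eq_of_pSpectralRadius_eq (zero_lt_one.trans hp) hsym ?_
  rw [Fintype.card_fin]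
  exact heq
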